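/- Let (A,∘) be a pre-Lie algebra over a field of characteristic zero. Then there exists a compatible L-dendriform algebra structure on A (i.e., bilinear operations ▷, ◁ making (A,▷,◁) an L-dendriform algebra with x∘y = x▷y − y◁x for all x,y ∈ A) if and only if there exist a module (l,r,V) of (A,∘) and an invertible O-operator T : V → A of (A,∘) associated to (l,r,V). -/

import Mathlib

universe u v

/-- A pre-Lie algebra structure. -/
def IsPreLie {K : Type u} {A : Type v} [Field K] [AddCommGroup A] [Module K A]
    (mul : A →ₗ[K] A →ₗ[K] A) : Prop :=
  ∀ x y z : A, mul (mul x y) z - mul x (mul y z) = mul (mul y x) z - mul y (mul x z)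

/-- A module `(l,r,V)` of a pre-Lie algebra `(A,∘)`. -/
def IsPreLieModule {K : Type u} {A V : Type*} [Field K] [AddCommGroup A] [Module K A]
    [AddCommGroup V] [Module K V]
    (mul : A →ₗ[K] A →ₗ[K] A) (l r : A →ₗ[K] Module.End K V) : Prop :=
  (∀ x y : A, l x * l y - l (mul x y) = l y * l x - l (mul y x)) ∧
  (∀ x y : A, l x * r y - r y * l x = r (mul x y) - r y * r x)

/-- An O-operator of a pre-Lie algebra `(A,∘)` associated to a module `(l,r,V)`. -/
def IsOOperator {K : Type u} {A V : Type*} [Field K] [AddCommGroup A] [Module K A]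
    [AddCommGroup V] [Module K V]
    (mul : A →ₗ[K] A →ₗ[K] A) (l r : A →ₗ[K] Module.End K V) (T : V →ₗ[K] A) : Prop :=
  ∀ u v : V, mul (T u) (T v) = T (l (T u) v + r (T v) u)

/-- An L-dendriform algebra structure. -/
def IsLDendriform {K : Type u} {A : Type v} [Field K] [AddCommGroup A] [Module K A]
    (tr tl : A →ₗ[K] A →ₗ[K] A) : Prop :=
  (∀ x y z : A, tr x (tr y z) =
      tr (tr x y) z + tr (tl x y) z + tr y (tr x z) - tr (tl y x) z - tr (tr y x) z) ∧
  (∀ x y z : A, tr x (tl y z) =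
      tl (tr x y) z + tl y (tr x z) + tl y (tl x z) - tl (tl y x) z)

/-!
An L-dendriform structure compatible with `∘` is the same thing as a module `(▷, -◁)` of `A` on
itself for which the identity is an O-operator. Conversely, an O-operator `T` of a module
`(l, r, V)` induces the L-dendriform structure `u ▷ v = l (T u) v`, `u ◁ v = -r (T u) v` on `V`,
and `T` maps its vertical operation `u ▷ v - v ◁ u` to `∘`; when `T` is invertible, transporting
this structure along `T` gives a compatible L-dendriform structure on `A`.
-/

section

variable {K : Type u} {A V : Type*} [Field K] [AddCommGroup A] [Module K A]
  [AddCommGroup V] [Module K V]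

theorem IsLDendriform.isPreLieModule {mul tr tl : A →ₗ[K] A →ₗ[K] A} (hLD : IsLDendriform tr tl)
    (hc : ∀ x y, mul x y = tr x y - tl y x) : IsPreLieModule mul tr (-tl) := by
  constructor
  · intro x y
    ext z
    simp only [LinearMap.sub_apply, Module.End.mul_apply, hc, map_sub, hLD.1 x y z]
    abel
  · intro x y
    ext z
    simp only [LinearMap.sub_apply, Module.End.mul_apply, LinearMap.neg_apply, hc, map_sub,
      map_neg, hLD.2 x y z]
    abel

theorem isOOperator_id_of_eq_sub {mul tr tl : A →ₗ[K] A →ₗ[K] A}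
    (hc : ∀ x y, mul x y = tr x y - tl y x) : IsOOperator mul tr (-tl) LinearMap.id := by
  intro u v
  simp only [LinearMap.id_apply, LinearMap.neg_apply, hc]
  abel

theorem IsOOperator.isLDendriform {mul : A →ₗ[K] A →ₗ[K] A} {l r : A →ₗ[K] Module.End K V}
    {T : V →ₗ[K] A} (hT : IsOOperator mul l r T) (hmod : IsPreLieModule mul l r) :
    IsLDendriform (l ∘ₗ T) (-(r ∘ₗ T)) := by
  constructor
  · intro x y z
    have hl := LinearMap.congr_fun (hmod.1 (T x) (T y)) z
    simp only [LinearMap.sub_apply, Module.End.mul_apply, hT x y, hT y x, map_add,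
      LinearMap.add_apply] at hl
    simp only [LinearMap.comp_apply, LinearMap.neg_apply, map_neg, LinearMap.neg_apply]
    linear_combination (norm := abel) hl
  · intro x y z
    have hr := LinearMap.congr_fun (hmod.2 (T x) (T y)) z
    simp only [LinearMap.sub_apply, Module.End.mul_apply, hT x y, map_add,
      LinearMap.add_apply] at hr
    simp only [LinearMap.comp_apply, LinearMap.neg_apply, map_neg, LinearMap.neg_apply]
    linear_combination (norm := abel) -hr

theorem IsOOperator.map_vertical {mul : A →ₗ[K] A →ₗ[K] A} {l r : A →ₗ[K] Module.End K V}
    {T : V →ₗ[K] A} (hT : IsOOperator mul l r T) (u v : V) :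
    mul (T u) (T v) = T ((l ∘ₗ T) u v - (-(r ∘ₗ T)) v u) := by
  simp only [hT u v, LinearMap.comp_apply, LinearMap.neg_apply, sub_neg_eq_add]

def LinearEquiv.conjBilin (E : V ≃ₗ[K] A) (f : V →ₗ[K] V →ₗ[K] V) : A →ₗ[K] A →ₗ[K] A :=
  (f.compl₁₂ E.symm.toLinearMap E.symm.toLinearMap).compr₂ E.toLinearMap

@[simp]
theorem LinearEquiv.conjBilin_apply (E : V ≃ₗ[K] A) (f : V →ₗ[K] V →ₗ[K] V) (x y : A) :
    E.conjBilin f x y = E (f (E.symm x) (E.symm y)) :=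
  rfl

theorem IsLDendriform.conjBilin {tr tl : V →ₗ[K] V →ₗ[K] V} (hLD : IsLDendriform tr tl)
    (E : V ≃ₗ[K] A) : IsLDendriform (E.conjBilin tr) (E.conjBilin tl) := by
  constructor
  · intro x y z
    simpa only [LinearEquiv.conjBilin_apply, LinearEquiv.symm_apply_apply, map_add, map_sub]
      using congrArg E (hLD.1 (E.symm x) (E.symm y) (E.symm z))
  · intro x y z
    simpa only [LinearEquiv.conjBilin_apply, LinearEquiv.symm_apply_apply, map_add, map_sub]
      using congrArg E (hLD.2 (E.symm x) (E.symm y) (E.symm z))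

theorem LinearEquiv.eq_conjBilin_sub {mul : A →ₗ[K] A →ₗ[K] A} {tr tl : V →ₗ[K] V →ₗ[K] V}
    (E : V ≃ₗ[K] A) (hE : ∀ u v, mul (E u) (E v) = E (tr u v - tl v u)) (x y : A) :
    mul x y = E.conjBilin tr x y - E.conjBilin tl y x := by
  simpa only [apply_symm_apply, map_sub, conjBilin_apply] using hE (E.symm x) (E.symm y)

end

theorem compatible_LDendriform_iff_invertible_OOperator_general
    {K : Type u} {A : Type v} [Field K] [AddCommGroup A] [Module K A]
    (mul : A →ₗ[K] A →ₗ[K] A) :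
    (∃ tr tl : A →ₗ[K] A →ₗ[K] A,
        IsLDendriform tr tl ∧ ∀ x y : A, mul x y = tr x y - tl y x) ↔
    (∃ (V : Type v) (_ : AddCommGroup V) (_ : Module K V)
        (l r : A →ₗ[K] Module.End K V) (T : V →ₗ[K] A),
        IsPreLieModule mul l r ∧ IsOOperator mul l r T ∧ Function.Bijective T) := by
  constructor
  · rintro ⟨tr, tl, hLD, hc⟩
    exact ⟨A, _, _, tr, -tl, LinearMap.id, hLD.isPreLieModule hc, isOOperator_id_of_eq_sub hc,
      Function.bijective_id⟩
  · rintro ⟨V, _, _, l, r, T, hmod, hT, hbij⟩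
    let E := LinearEquiv.ofBijective T hbij
    exact ⟨E.conjBilin (l ∘ₗ T), E.conjBilin (-(r ∘ₗ T)), (hT.isLDendriform hmod).conjBilin E,
      E.eq_conjBilin_sub hT.map_vertical⟩

/-- A pre-Lie algebra `(A,∘)` admits a compatible L-dendriform algebra
structure (with `(A,∘)` as the associated vertical pre-Lie algebra, i.e.
`x∘y = x▷y − y◁x`) if and only if there exist a module `(l,r,V)` of `(A,∘)` and an
invertible O-operator `T : V → A` associated to `(l,r,V)`. -/
theorem compatible_LDendriform_iff_invertible_OOperator
    {K : Type u} {A : Type v} [Field K] [CharZero K] [AddCommGroup A] [Module K A]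
    (mul : A →ₗ[K] A →ₗ[K] A) (h : IsPreLie mul) :
    (∃ tr tl : A →ₗ[K] A →ₗ[K] A,
        IsLDendriform tr tl ∧ ∀ x y : A, mul x y = tr x y - tl y x) ↔
    (∃ (V : Type v) (_ : AddCommGroup V) (_ : Module K V)
        (l r : A →ₗ[K] Module.End K V) (T : V →ₗ[K] A),
        IsPreLieModule mul l r ∧ IsOOperator mul l r T ∧ Function.Bijective T) :=
  compatible_LDendriform_iff_invertible_OOperator_general mul
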